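/- Let X be a real Banach space of dimension greater than 1 with uncountable density κ = dens(X), and suppose X admits a fundamental biorthogonal system (x_α, x*_α)_{α<κ}. Then non(X) = cf([κ]^ω). -/

import Mathlib

open Cardinal Set

universe u v

noncomputable section

/-- A hyperplane of a normed space: the kernel of a nonzero continuous linear functional. -/
def IsHyperplane {X : Type u} [NormedAddCommGroup X] [NormedSpace ℝ X] (H : Set X) : Prop :=
  ∃ f : X →L[ℝ] ℝ, f ≠ 0 ∧ H = {x | f x = 0}

/-- Member of the σ-ideal generated by hyperplanes: covered by countably many hyperplanes. -/
def InHyperplaneIdeal {X : Type u} [NormedAddCommGroup X] [NormedSpace ℝ X] (Y : Set X) : Prop :=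
  ∃ F : Set (Set X), F.Countable ∧ (∀ H ∈ F, IsHyperplane H) ∧ Y ⊆ ⋃₀ F

/-- Additivity of the hyperplane σ-ideal. -/
def addH (X : Type u) [NormedAddCommGroup X] [NormedSpace ℝ X] : Cardinal.{u} :=
  sInf {c | ∃ F : Set (Set X), (∀ A ∈ F, InHyperplaneIdeal A) ∧
    ¬ InHyperplaneIdeal (⋃₀ F) ∧ #F = c}

/-- Covering number of the hyperplane σ-ideal. -/
def covH (X : Type u) [NormedAddCommGroup X] [NormedSpace ℝ X] : Cardinal.{u} :=
  sInf {c | ∃ F : Set (Set X), (∀ A ∈ F, InHyperplaneIdeal A) ∧ ⋃₀ F = Set.univ ∧ #F = c}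

/-- Uniformity of the hyperplane σ-ideal. -/
def nonH (X : Type u) [NormedAddCommGroup X] [NormedSpace ℝ X] : Cardinal.{u} :=
  sInf {c | ∃ Y : Set X, ¬ InHyperplaneIdeal Y ∧ #Y = c}

/-- Cofinality of the hyperplane σ-ideal. -/
def cofH (X : Type u) [NormedAddCommGroup X] [NormedSpace ℝ X] : Cardinal.{u} :=
  sInf {c | ∃ F : Set (Set X), (∀ A ∈ F, InHyperplaneIdeal A) ∧
    (∀ Y : Set X, InHyperplaneIdeal Y → ∃ A ∈ F, Y ⊆ A) ∧ #F = c}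

/-- Density of a topological space: least cardinality of a dense subset. -/
def densH (X : Type u) [TopologicalSpace X] : Cardinal.{u} :=
  sInf {c | ∃ D : Set X, Dense D ∧ #D = c}

/-- `cf([κ]^ω)`: least cardinality of a cofinal family of countable subsets of κ. -/
def cfCtblSubsets (κ : Cardinal.{u}) : Cardinal.{u} :=
  sInf {c | ∃ F : Set (Set κ.out), (∀ S ∈ F, S.Countable) ∧
    (∀ S : Set κ.out, S.Countable → ∃ T ∈ F, S ⊆ T) ∧ #F = c}

/-- A compact space has small diagonal. -/
def HasSmallDiagonal (K : Type u) [TopologicalSpace K] : Prop :=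
  ∀ A : Set (K × K), #A = Cardinal.aleph 1 → A ∩ Set.diagonal K = ∅ →
    ∃ B ⊆ A, ¬ B.Countable ∧ closure B ∩ Set.diagonal K = ∅

/-- A topological space is scattered. -/
def IsScattered (K : Type u) [TopologicalSpace K] : Prop :=
  ∀ S : Set K, S.Nonempty → ∃ x ∈ S, ∃ U : Set K, IsOpen U ∧ U ∩ S = {x}

/-!
A vector `y` is a limit of finite linear combinations of the `x_i`, so only countably many of its
coordinates `x*_i y` are nonzero. If `#Y < cf([κ]^ω)`, these countable supports of the points of
`Y` are not cofinal: some countable set `S` of indices is contained in none of them, i.e. every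
point of `Y` lies in one of the countably many hyperplanes `ker x*_α`, `α ∈ S`.

Conversely, enumerate each member `W` of a cofinal family of countable sets of indices as
`W ⊆ {e 0, e 1, …}` and consider the curve `t ↦ ∑ tⁿ/n! · x_{e n}/‖x_{e n}‖`. A nonzero functional
`g` is nonzero on some `x_i`; if `i` is enumerated by `e`, then `g` composed with the curve is a
nonzero entire function of `t`, with only countably many zeros. The indices witnessing this for
countably many hyperplanes all lie in one `W`, so these hyperplanes cannot cover the curve of `W`
on a fixed set of `ℵ₁` parameters. The `cf([κ]^ω) · ℵ₁ = cf([κ]^ω)` points so obtained are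
therefore not in `H_σ(X)`.
-/
open Filter Function Submodule

section CountableCofinal

variable {α β : Type u}

def IsCountableCofinal (F : Set (Set α)) : Prop :=
  (∀ S ∈ F, S.Countable) ∧ ∀ S : Set α, S.Countable → ∃ T ∈ F, S ⊆ T

lemma isCountableCofinal_setOf_countable : IsCountableCofinal {S : Set α | S.Countable} :=
  ⟨fun _ hS => hS, fun S hS => ⟨S, hS, subset_rfl⟩⟩

lemma IsCountableCofinal.image_image {F : Set (Set α)} (hF : IsCountableCofinal F) (e : α ≃ β) :
    IsCountableCofinal (image e '' F) := by
  refine ⟨?_, fun S hS => ?_⟩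
  · rintro _ ⟨T, hT, rfl⟩
    exact (hF.1 T hT).image e
  · obtain ⟨T, hT, hST⟩ := hF.2 (e.symm '' S) (hS.image _)
    refine ⟨e '' T, mem_image_of_mem _ hT, ?_⟩
    simpa only [e.image_symm_image] using image_mono (f := e) hST

lemma mk_image_image_equiv (F : Set (Set α)) (e : α ≃ β) : #(image e '' F) = #F :=
  mk_image_eq (image_injective.mpr e.injective)

lemma cfCtblSubsets_mk_le {F : Set (Set α)} (hF : IsCountableCofinal F) :
    cfCtblSubsets #α ≤ #F := by
  have hF' := hF.image_image outMkEquiv.symm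
  exact csInf_le' ⟨_, hF'.1, hF'.2, mk_image_image_equiv F _⟩

lemma exists_isCountableCofinal_mk_eq (α : Type u) :
    ∃ F : Set (Set α), IsCountableCofinal F ∧ #F = cfCtblSubsets #α := by
  obtain ⟨F, hF₁, hF₂, hF⟩ : cfCtblSubsets #α ∈ _ := csInf_mem
    ⟨_, _, isCountableCofinal_setOf_countable.1, isCountableCofinal_setOf_countable.2, rfl⟩
  exact ⟨_, IsCountableCofinal.image_image ⟨hF₁, hF₂⟩ outMkEquiv,
    (mk_image_image_equiv F _).trans hF⟩

lemma aleph0_lt_cfCtblSubsets_mk (h : ℵ₀ < #α) : ℵ₀ < cfCtblSubsets #α := by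
  obtain ⟨F, hF, hFc⟩ := exists_isCountableCofinal_mk_eq α
  rw [← hFc]
  by_contra! hle
  have hcover : ⋃₀ F = Set.univ := eq_univ_of_forall fun a =>
    let ⟨T, hT, haT⟩ := hF.2 {a} (countable_singleton a)
    ⟨T, hT, haT rfl⟩
  refine h.not_ge ?_
  calc #α = #(⋃₀ F) := by rw [hcover, mk_univ]
    _ ≤ #F * ⨆ S : F, #S := mk_sUnion_le F
    _ ≤ ℵ₀ * ℵ₀ :=
      mul_le_mul' hle (ciSup_le' fun S => le_aleph0_iff_set_countable.mpr (hF.1 S S.2))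
    _ = ℵ₀ := aleph0_mul_aleph0

lemma IsCountableCofinal.exists_enumerations [Nonempty α] {F : Set (Set α)}
    (hF : IsCountableCofinal F) :
    ∃ V : Set (ℕ → α), #V ≤ #F ∧ ∀ S : Set α, S.Countable → ∃ e ∈ V, S ⊆ range e := by
  choose e he using fun W : F => countable_iff_exists_subset_range.mp (hF.1 W W.2)
  refine ⟨range e, mk_range_le, fun S hS => ?_⟩
  obtain ⟨W, hW, hSW⟩ := hF.2 S hS
  exact ⟨e ⟨W, hW⟩, mem_range_self _, hSW.trans (he ⟨W, hW⟩)⟩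

end CountableCofinal

section Hyperplanes

variable {X : Type u} [NormedAddCommGroup X] [NormedSpace ℝ X]

lemma inHyperplaneIdeal_iff {Y : Set X} : InHyperplaneIdeal Y ↔
    ∃ G : Set (X →L[ℝ] ℝ), G.Countable ∧ 0 ∉ G ∧ ∀ y ∈ Y, ∃ g ∈ G, g y = 0 := by
  constructor
  · rintro ⟨F, hFc, hF, hYF⟩
    choose g hg0 hgF using hF
    have : Countable F := hFc.to_subtype
    refine ⟨range fun H : F => g H H.2, countable_range _, fun ⟨H, hH⟩ => hg0 H H.2 hH, ?_⟩
    intro y hy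
    obtain ⟨H, hH, hyH⟩ := hYF hy
    refine ⟨_, mem_range_self ⟨H, hH⟩, ?_⟩
    rw [hgF H hH] at hyH
    exact hyH
  · rintro ⟨G, hGc, hG0, hYG⟩
    refine ⟨(fun g => {x | g x = 0}) '' G, hGc.image _, ?_, fun y hy => ?_⟩
    · rintro _ ⟨g, hg, rfl⟩
      exact ⟨g, ne_of_mem_of_not_mem hg hG0, rfl⟩
    · obtain ⟨g, hg, hgy⟩ := hYG y hy
      exact ⟨_, ⟨g, hg, rfl⟩, hgy⟩

lemma nonH_eq_of_forall_le {c : Cardinal.{u}} {Y : Set X} (hY : ¬ InHyperplaneIdeal Y)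
    (hYc : #Y ≤ c) (h : ∀ Y : Set X, ¬ InHyperplaneIdeal Y → c ≤ #Y) : nonH X = c := by
  unfold nonH
  refine le_antisymm (le_trans (csInf_le' ⟨Y, hY, rfl⟩) hYc) (le_csInf ⟨#Y, Y, hY, rfl⟩ ?_)
  rintro _ ⟨Y', hY', rfl⟩
  exact h Y' hY'

end Hyperplanes

section LowerBound

variable {X : Type u} [NormedAddCommGroup X] [NormedSpace ℝ X] {ι : Type u}

theorem cfCtblSubsets_mk_le_of_not_inHyperplaneIdeal {f : ι → X →L[ℝ] ℝ} (hf : ∀ i, f i ≠ 0)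
    (hsupp : ∀ y, {i | f i y ≠ 0}.Countable) {Y : Set X} (hY : ¬ InHyperplaneIdeal Y) :
    cfCtblSubsets #ι ≤ #Y := by
  by_contra! hlt
  have hG : ¬ ∀ S : Set ι, S.Countable → ∃ y : Y, S ⊆ {i | f i y ≠ 0} := fun hcof =>
    hlt.not_ge <| (cfCtblSubsets_mk_le (F := range fun y : Y => {i | f i y ≠ 0})
      ⟨forall_mem_range.2 fun y => hsupp y, fun S hS => exists_range_iff.mpr (hcof S hS)⟩).trans
      mk_range_le
  push Not at hG
  obtain ⟨S, hS, hSG⟩ := hG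
  refine hY <| inHyperplaneIdeal_iff.mpr
    ⟨f '' S, hS.image f, fun ⟨i, _, hi⟩ => hf i hi, fun y hy => ?_⟩
  obtain ⟨i, hiS, hi⟩ := not_subset.mp (hSG ⟨y, hy⟩)
  exact ⟨f i, mem_image_of_mem f hiS, not_not.mp hi⟩

end LowerBound

section Biorthogonal

variable {X : Type u} [NormedAddCommGroup X] [NormedSpace ℝ X] {ι : Type*} {x : ι → X}
  {f : ι → X →L[ℝ] ℝ}

lemma topologicalClosure_span_le_ker {g : X →L[ℝ] ℝ} {s : Set X} (h : ∀ v ∈ s, g v = 0) :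
    (span ℝ s).topologicalClosure ≤ g.ker :=
  topologicalClosure_minimal _ (span_le.mpr h) g.isClosed_ker

lemma exists_apply_ne_zero_of_topologicalClosure_span_eq_top
    (hfund : (span ℝ (range x)).topologicalClosure = ⊤) {g : X →L[ℝ] ℝ} (hg : g ≠ 0) :
    ∃ i, g (x i) ≠ 0 := by
  by_contra! h
  refine hg (ContinuousLinearMap.ext fun y => ?_)
  exact topologicalClosure_span_le_ker (forall_mem_range.2 h) (hfund ▸ mem_top)

variable [DecidableEq ι]

lemma ne_zero_of_biorthogonal (hbi : ∀ i j, f i (x j) = if i = j then 1 else 0) (i : ι) :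
    f i ≠ 0 := fun h => by
  simpa [h] using hbi i i

lemma injective_of_biorthogonal (hbi : ∀ i j, f i (x j) = if i = j then 1 else 0) :
    Injective x := fun i j h => by
  by_contra hij
  simpa [hij, ← h, hbi i i] using hbi i j

lemma countable_setOf_apply_ne_zero_of_biorthogonal
    (hbi : ∀ i j, f i (x j) = if i = j then 1 else 0)
    (hfund : (span ℝ (range x)).topologicalClosure = ⊤) (y : X) : {i | f i y ≠ 0}.Countable := by
  have hy : y ∈ closure (span ℝ (range x) : Set X) := by
    rw [← topologicalClosure_coe, hfund]
    trivial
  obtain ⟨z, hz, hzy⟩ := mem_closure_iff_seq_limit.mp hy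
  choose T hTx hzT using fun n => mem_span_finite_of_mem_span (hz n)
  set A := ⋃ n, (T n : Set X)
  refine ((countable_iUnion fun n => (T n).countable_toSet).preimage
    (injective_of_biorthogonal hbi)).mono fun i hi => ?_
  by_contra hiA
  have hfA : ∀ v ∈ A, f i v = 0 := by
    intro v hv
    obtain ⟨n, hn⟩ := mem_iUnion.mp hv
    obtain ⟨j, rfl⟩ := hTx n hn
    rw [hbi, if_neg]
    rintro rfl
    exact hiA hv
  refine hi (topologicalClosure_span_le_ker hfA ?_)
  rw [← SetLike.mem_coe, topologicalClosure_coe]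
  exact mem_closure_of_tendsto hzy (Eventually.of_forall fun n =>
    span_mono (subset_iUnion (fun n => (T n : Set X)) n) (hzT n))

end Biorthogonal

section EntireFunctions

open Nat

theorem AnalyticOnNhd.countable_setOf_eq_zero_inter {𝕜 E : Type*} [NontriviallyNormedField 𝕜]
    [SecondCountableTopology 𝕜] [NormedAddCommGroup E] [NormedSpace 𝕜 E] {f : 𝕜 → E}
    {U : Set 𝕜} (hf : AnalyticOnNhd 𝕜 f U) (hU : IsPreconnected U) (h : ¬ EqOn f 0 U) :
    ({z | f z = 0} ∩ U).Countable := by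
  have hne := (hf.eqOn_zero_or_eventually_ne_zero_of_preconnected hU).resolve_left h
  exact (HereditarilyLindelofSpace.isLindelof _).countable_of_isDiscrete
    (isDiscrete_of_codiscreteWithin (s := {z | f z = 0}) hne)

theorem countable_setOf_tsum_mul_pow_eq_zero {c : ℕ → ℝ} {C : ℝ} (hc : ∀ n, |c n| ≤ C / n !)
    (hc0 : c ≠ 0) : {t : ℝ | ∑' n, c n * t ^ n = 0}.Countable := by
  set p := FormalMultilinearSeries.ofScalars ℝ c
  have hp : p.radius = ⊤ := by
    refine p.radius_eq_top_of_summable_norm fun r => .of_nonneg_of_le (fun n => by positivity)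
      (fun n => ?_) ((Real.summable_pow_div_factorial r).mul_left C)
    calc ‖p n‖ * r ^ n ≤ C / n ! * r ^ n := by
          rw [FormalMultilinearSeries.ofScalars_norm, Real.norm_eq_abs]
          gcongr
          exact hc n
      _ = C * (r ^ n / n !) := by ring
  have hball : HasFPowerSeriesOnBall p.sum p 0 ⊤ := hp ▸ p.hasFPowerSeriesOnBall (by simp [hp])
  have hsum : p.sum = fun t => ∑' n, c n * t ^ n := by
    ext t
    simp [p, FormalMultilinearSeries.sum, mul_comm]
  have hne : ¬ EqOn p.sum 0 univ := fun h => hc0 <| by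
    have hsum_zero : p.sum = 0 := funext fun t => h (mem_univ t)
    have hzero : HasFPowerSeriesAt 0 p 0 := hsum_zero ▸ hball.hasFPowerSeriesAt
    exact (FormalMultilinearSeries.ofScalars_series_eq_zero ℝ).mp hzero.eq_zero
  have hanalytic : AnalyticOnNhd ℝ p.sum univ := by simpa using hball.analyticOnNhd
  simpa [hsum] using hanalytic.countable_setOf_eq_zero_inter isPreconnected_univ hne

end EntireFunctions

section ExpCurve

open Nat

variable {X : Type u} [NormedAddCommGroup X] [NormedSpace ℝ X]

/-- Normalising the terms makes the series converge for every `v` and every `t`. -/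
def expCurve (v : ℕ → X) (t : ℝ) : X :=
  ∑' n, (t ^ n / n !) • (‖v n‖⁻¹ • v n)

lemma norm_inv_norm_smul_le_one (w : X) : ‖‖w‖⁻¹ • w‖ ≤ 1 := by
  rcases eq_or_ne w 0 with rfl | hw
  · simp
  · exact (norm_smul_inv_norm hw).le

variable [CompleteSpace X]

lemma summable_expCurve (v : ℕ → X) (t : ℝ) :
    Summable fun n => (t ^ n / n !) • (‖v n‖⁻¹ • v n) := by
  refine .of_norm_bounded (Real.summable_pow_div_factorial |t|) fun n => ?_
  rw [norm_smul, Real.norm_eq_abs, abs_div, abs_pow, abs_of_pos (by positivity : (0 : ℝ) < n !)]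
  exact mul_le_of_le_one_right (by positivity) (norm_inv_norm_smul_le_one _)

lemma countable_setOf_apply_expCurve_eq_zero (v : ℕ → X) {g : X →L[ℝ] ℝ}
    (hg : ∃ n, g (v n) ≠ 0) : {t | g (expCurve v t) = 0}.Countable := by
  have hseries : ∀ t, g (expCurve v t) = ∑' n, g (‖v n‖⁻¹ • v n) / n ! * t ^ n := fun t => by
    rw [expCurve, g.map_tsum (summable_expCurve v t)]
    congr 1 with n
    rw [map_smul, smul_eq_mul]
    ring
  simp only [hseries]
  refine countable_setOf_tsum_mul_pow_eq_zero (C := ‖g‖) (fun n => ?_) fun h => ?_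
  · rw [abs_div, abs_of_pos (by positivity : (0 : ℝ) < n !)]
    gcongr
    calc |g (‖v n‖⁻¹ • v n)| ≤ ‖g‖ * ‖‖v n‖⁻¹ • v n‖ := g.le_opNorm _
      _ ≤ ‖g‖ := mul_le_of_le_one_right (norm_nonneg g) (norm_inv_norm_smul_le_one _)
  · obtain ⟨n, hn⟩ := hg
    have hvn : v n ≠ 0 := fun h0 => hn (by simp [h0])
    simpa [hn, hvn, Nat.factorial_ne_zero] using congr_fun h n

lemma exists_mem_forall_apply_expCurve_ne_zero (v : ℕ → X) {G : Set (X →L[ℝ] ℝ)}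
    (hG : G.Countable) (hv : ∀ g ∈ G, ∃ n, g (v n) ≠ 0) {T : Set ℝ} (hT : ¬ T.Countable) :
    ∃ t ∈ T, ∀ g ∈ G, g (expCurve v t) ≠ 0 := by
  by_contra! h
  exact hT ((hG.biUnion fun g hg => countable_setOf_apply_expCurve_eq_zero v (hv g hg)).mono
    fun t ht => let ⟨g, hg, hgt⟩ := h t ht; mem_iUnion₂.2 ⟨g, hg, hgt⟩)

theorem not_inHyperplaneIdeal_image2_expCurve {ι : Type*} {x : ι → X}
    (hx : ∀ g : X →L[ℝ] ℝ, g ≠ 0 → ∃ i, g (x i) ≠ 0) {V : Set (ℕ → ι)}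
    (hV : ∀ S : Set ι, S.Countable → ∃ e ∈ V, S ⊆ range e) {T : Set ℝ} (hT : ¬ T.Countable) :
    ¬ InHyperplaneIdeal (image2 (fun e t => expCurve (x ∘ e) t) V T) := by
  rw [inHyperplaneIdeal_iff]
  rintro ⟨G, hG, hG0, hcov⟩
  choose idx hidx using fun g : G => hx g (ne_of_mem_of_not_mem g.2 hG0)
  have : Countable G := hG.to_subtype
  obtain ⟨e, he, hidx_e⟩ := hV (range idx) (countable_range idx)
  have hv : ∀ g ∈ G, ∃ n, g (x (e n)) ≠ 0 := fun g hg => by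
    obtain ⟨n, hn⟩ := hidx_e (mem_range_self ⟨g, hg⟩)
    exact ⟨n, hn ▸ hidx ⟨g, hg⟩⟩
  obtain ⟨t, ht, hne⟩ := exists_mem_forall_apply_expCurve_ne_zero (x ∘ e) hG hv hT
  obtain ⟨g, hg, hgz⟩ := hcov _ (mem_image2_of_mem he ht)
  exact hne g hg hgz

end ExpCurve

theorem exists_not_inHyperplaneIdeal_mk_le_cfCtblSubsets {X : Type u} [NormedAddCommGroup X]
    [NormedSpace ℝ X] [CompleteSpace X] {ι : Type u} {x : ι → X}
    (hx : ∀ g : X →L[ℝ] ℝ, g ≠ 0 → ∃ i, g (x i) ≠ 0) (hι : ℵ₀ < #ι) :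
    ∃ Y : Set X, ¬ InHyperplaneIdeal Y ∧ #Y ≤ cfCtblSubsets #ι := by
  have : Nonempty ι := mk_ne_zero_iff.mp (aleph0_pos.trans hι).ne'
  have hcf := aleph0_lt_cfCtblSubsets_mk hι
  obtain ⟨F, hF, hFc⟩ := exists_isCountableCofinal_mk_eq ι
  obtain ⟨V, hVF, hV⟩ := hF.exists_enumerations
  obtain ⟨T, hT⟩ : ∃ T : Set ℝ, #T = ℵ₁ :=
    le_mk_iff_exists_set.mp (mk_real ▸ aleph_one_le_continuum)
  have hTunc : ¬ T.Countable := by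
    rw [← le_aleph0_iff_set_countable, hT]
    exact aleph0_lt_aleph_one.not_ge
  refine ⟨_, not_inHyperplaneIdeal_image2_expCurve hx hV hTunc, ?_⟩
  calc #(image2 (fun e t => expCurve (x ∘ e) t) V T) ≤ #(V ×ˢ T) := by
        rw [← image_uncurry_prod]
        exact mk_image_le
    _ = #V * lift.{u} #T := by rw [mk_congr (Equiv.Set.prod V T), mk_prod, lift_uzero]
    _ ≤ cfCtblSubsets #ι * cfCtblSubsets #ι := by
        gcongr
        · exact hVF.trans hFc.le
        · rw [lift_eq_aleph_one.mpr hT]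
          exact aleph_one_le_iff.mpr hcf
    _ = cfCtblSubsets #ι := mul_eq_self hcf.le

open Classical in
theorem stmt19_general (X : Type u) [NormedAddCommGroup X] [NormedSpace ℝ X] [CompleteSpace X]
    (hunc : Cardinal.aleph0 < densH X)
    (ι : Type u) (hι : #ι = densH X)
    (x : ι → X) (f : ι → X →L[ℝ] ℝ)
    (hbi : ∀ i j, f i (x j) = if i = j then 1 else 0)
    (hfund : Submodule.topologicalClosure (Submodule.span ℝ (Set.range x)) = ⊤) :
    nonH X = cfCtblSubsets (densH X) := by
  rw [← hι] at hunc ⊢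
  obtain ⟨Y, hY, hYc⟩ := exists_not_inHyperplaneIdeal_mk_le_cfCtblSubsets
    (fun _ => exists_apply_ne_zero_of_topologicalClosure_span_eq_top hfund) hunc
  exact nonH_eq_of_forall_le hY hYc fun _ =>
    cfCtblSubsets_mk_le_of_not_inHyperplaneIdeal (ne_zero_of_biorthogonal hbi)
      (countable_setOf_apply_ne_zero_of_biorthogonal hbi hfund)

open Classical in
/-- a Banach space of uncountable density κ with a fundamental biorthogonal
system (indexed by a set of size κ) has non(X) = cf([κ]^ω). -/
theorem stmt19 (X : Type u) [NormedAddCommGroup X] [NormedSpace ℝ X] [CompleteSpace X]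
    (hdim : 1 < Module.rank ℝ X) (hunc : Cardinal.aleph0 < densH X)
    (ι : Type u) (hι : #ι = densH X)
    (x : ι → X) (f : ι → X →L[ℝ] ℝ)
    (hbi : ∀ i j, f i (x j) = if i = j then 1 else 0)
    (hfund : Submodule.topologicalClosure (Submodule.span ℝ (Set.range x)) = ⊤) :
    nonH X = cfCtblSubsets (densH X) :=
  stmt19_general X hunc ι hι x f hbi hfund

end
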